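/- The scattering operator of the quantum walk on an arbitrary graph is unitary: let G be a finite simple graph in which every vertex has degree ≥ 1, and let the walker's state be a function ψ : Dart(G) → ℂ (one amplitude per dart, i.e., per oriented edge, corresponding to the polarity-indexed amplitudes ψ^{σ(u,v)}_{(u,v)}). Define S : (Dart(G) → ℂ) → (Dart(G) → ℂ) by (S ψ)(d) = Σ_{d' : source d' = source d} ((2/deg(source d)) − δ_{d,d'}) · ψ(d'), i.e., S applies the diffusion D_{deg u} to the amplitudes of the darts emanating from each vertex u. Then S preserves the ℓ² norm: Σ_{d} |(S ψ)(d)|² = Σ_{d} |ψ(d)|² for every ψ. -/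

import Mathlib

/-! The diffusion `(2/n)·J − I` is the reflection `f ↦ 2·mean f − f` of `Eⁿ` through the
diagonal, hence an isometry. On darts, `S` performs this reflection independently on each fibre
of `Dart.fst`, the fibre over `v` having `deg v` elements, so it preserves the ℓ² norm
fibre by fibre. -/

open Finset

/-- The scattering operator of the quantum walk on a graph `G`: the state is one complex
amplitude per dart (oriented edge), and at each vertex `u` the diffusion
`D_{deg u} = (2/deg u)·J − I` is applied to the amplitudes of the darts emanating from `u`:
`(S ψ)(d) = Σ_{d' : source d' = source d} ((2/deg(source d)) − δ_{d,d'}) · ψ(d')`. -/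
noncomputable def graphScatter {V : Type*} [Fintype V] [DecidableEq V]
    (G : SimpleGraph V) [DecidableRel G.Adj] (ψ : G.Dart → ℂ) : G.Dart → ℂ :=
  fun d => ∑ d' : G.Dart,
    (if d'.fst = d.fst then (2 / (G.degree d.fst : ℂ)) - (if d = d' then 1 else 0) else 0) *
      ψ d'

open RealInnerProductSpace in
theorem Finset.sum_norm_two_div_card_smul_sum_sub_sq {ι E : Type*} [NormedAddCommGroup E]
    [InnerProductSpace ℝ E] (s : Finset ι) (f : ι → E) :
    ∑ i ∈ s, ‖(2 / #s : ℝ) • ∑ j ∈ s, f j - f i‖ ^ 2 = ∑ i ∈ s, ‖f i‖ ^ 2 := by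
  rcases s.eq_empty_or_nonempty with rfl | hs
  · simp
  set c : ℝ := 2 / #s
  set S := ∑ j ∈ s, f j
  have hc : c * #s = 2 := div_mul_cancel₀ _ (by exact_mod_cast hs.card_pos.ne')
  calc ∑ i ∈ s, ‖c • S - f i‖ ^ 2
      = #s * ‖c • S‖ ^ 2 - 2 * ⟪c • S, S⟫ + ∑ i ∈ s, ‖f i‖ ^ 2 := by
        simp only [norm_sub_sq_real, sum_add_distrib, sum_sub_distrib, sum_const, nsmul_eq_mul,
          ← mul_sum, ← inner_sum, S]
    _ = ∑ i ∈ s, ‖f i‖ ^ 2 := by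
        rw [norm_smul, real_inner_smul_left, real_inner_self_eq_norm_sq, Real.norm_eq_abs,
          mul_pow, sq_abs]
        linear_combination (c * ‖S‖ ^ 2) * hc

theorem graphScatter_apply {V : Type*} [Fintype V] [DecidableEq V]
    (G : SimpleGraph V) [DecidableRel G.Adj] (ψ : G.Dart → ℂ) (d : G.Dart) :
    graphScatter G ψ d =
      (2 / G.degree d.fst : ℝ) • ∑ d' : G.Dart with d'.fst = d.fst, ψ d' - ψ d := by
  have hd : d ∈ ({d' : G.Dart | d'.fst = d.fst} : Finset _) := by simp
  simp only [graphScatter, ite_mul, zero_mul, ← sum_filter, sub_mul, sum_sub_distrib, ← mul_sum,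
    one_mul, filter_eq, if_pos hd, sum_singleton, Complex.real_smul]
  push_cast
  rfl

theorem graphScatter_norm_preserving_general {V : Type*} [Fintype V] [DecidableEq V]
    (G : SimpleGraph V) [DecidableRel G.Adj]
    (ψ : G.Dart → ℂ) :
    ∑ d : G.Dart, ‖graphScatter G ψ d‖ ^ 2 =
      ∑ d : G.Dart, ‖ψ d‖ ^ 2 := by
  rw [← sum_fiberwise univ (fun d : G.Dart => d.fst),
    ← sum_fiberwise univ (fun d : G.Dart => d.fst)]
  refine sum_congr rfl fun v _ => ?_
  rw [← sum_norm_two_div_card_smul_sum_sub_sq _ ψ, G.dart_fst_fiber_card_eq_degree]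
  refine sum_congr rfl fun d hd => ?_
  rw [graphScatter_apply, (mem_filter.mp hd).2]

/-- The scattering operator of the quantum walk on an arbitrary graph (every vertex of
degree ≥ 1) preserves the ℓ² norm: `Σ_d |(S ψ)(d)|² = Σ_d |ψ(d)|²`. -/
theorem graphScatter_norm_preserving {V : Type*} [Fintype V] [DecidableEq V]
    (G : SimpleGraph V) [DecidableRel G.Adj] (hdeg : ∀ v : V, 1 ≤ G.degree v)
    (ψ : G.Dart → ℂ) :
    ∑ d : G.Dart, ‖graphScatter G ψ d‖ ^ 2 =
      ∑ d : G.Dart, ‖ψ d‖ ^ 2 :=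
  graphScatter_norm_preserving_general G ψ
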